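/- arXiv:2507.00876 — 2 statements merged into one kernel-verified Lean document; each statement's English description precedes it below -/
import Mathlib

section
/- Any cubic graph containing K_6 as a minor has at least 18 vertices. -/
/-!
Each branch set `S` of a `K₆` minor has an edge to each of the five other, pairwise disjoint,
branch sets, so at least five vertices outside `S` have a neighbour in `S`. In a cubic graph a
single vertex has only three neighbours, and an adjacent pair (a connected `S` of size two)
only four outside itself. Hence every branch set has at least three vertices, and the six
disjoint branch sets cover at least eighteen.
-/

/-- `G` has a `K₆` minor, defined via branch sets: six nonempty, pairwise disjoint
vertex sets, each inducing a connected subgraph, with an edge of `G` between any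
two of them. -/
def HasK6Minor {V : Type*} (G : SimpleGraph V) : Prop :=
  ∃ f : Fin 6 → Set V,
    (∀ i, (f i).Nonempty) ∧
    (Pairwise fun i j => Disjoint (f i) (f j)) ∧
    (∀ i, (G.induce (f i)).Connected) ∧
    (∀ i j, i ≠ j → ∃ u ∈ f i, ∃ v ∈ f j, G.Adj u v)

open Set

theorem Set.natCard_le_ncard_of_disjoint_of_inter_nonempty {ι α : Type*} {s : ι → Set α}
    (hs : Pairwise fun i j => Disjoint (s i) (s j)) {t : Set α} (ht : t.Finite)
    (hmeet : ∀ i, (s i ∩ t).Nonempty) : Nat.card ι ≤ t.ncard := by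
  choose x hx using hmeet
  rw [← ncard_univ]
  refine ncard_le_ncard_of_injOn x (fun i _ => (hx i).2) (fun i _ j _ hij => ?_) ht
  by_contra hne
  exact Set.disjoint_left.mp (hs hne) (hx i).1 (hij ▸ (hx j).1)

namespace SimpleGraph

variable {V : Type*} (G : SimpleGraph V)

def outerBoundary (S : Set V) : Set V := {v | v ∉ S ∧ ∃ u ∈ S, G.Adj u v}

lemma outerBoundary_singleton_subset (u : V) : G.outerBoundary {u} ⊆ G.neighborSet u := by
  rintro v ⟨-, w, rfl, hwv⟩
  exact hwv

lemma outerBoundary_pair_subset (u v : V) :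
    G.outerBoundary {u, v} ⊆ (G.neighborSet u \ {v}) ∪ (G.neighborSet v \ {u}) := by
  rintro w ⟨hw, x, rfl | rfl, hxw⟩ <;>
    simp only [mem_insert_iff, mem_singleton_iff, not_or] at hw
  · exact .inl ⟨hxw, hw.2⟩
  · exact .inr ⟨hxw, hw.1⟩

lemma adj_of_preconnected_induce_pair {u v : V} (huv : u ≠ v)
    (hconn : (G.induce {u, v}).Preconnected) : G.Adj u v := by
  obtain ⟨p⟩ := hconn ⟨u, .inl rfl⟩ ⟨v, .inr rfl⟩
  have hadj : G.Adj u p.snd :=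
    p.adj_snd (Walk.not_nil_of_ne fun h => huv (congrArg Subtype.val h))
  rcases p.snd.2 with h | h
  · exact absurd (h ▸ hadj) G.irrefl
  · exact h ▸ hadj

lemma natCard_ne_le_ncard_outerBoundary {ι : Type*} [Finite V] {f : ι → Set V}
    (hdisj : Pairwise fun i j => Disjoint (f i) (f j))
    (hadj : ∀ i j, i ≠ j → ∃ u ∈ f i, ∃ v ∈ f j, G.Adj u v) (i : ι) :
    Nat.card {j // j ≠ i} ≤ (G.outerBoundary (f i)).ncard := by
  refine natCard_le_ncard_of_disjoint_of_inter_nonempty (s := fun j : {j // j ≠ i} => f j)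
    (fun j k hjk => hdisj (Subtype.coe_ne_coe.mpr hjk)) (toFinite _) fun ⟨j, hj⟩ => ?_
  obtain ⟨u, hu, v, hv, huv⟩ := hadj i j hj.symm
  exact ⟨v, hv, fun hvi => Set.disjoint_left.mp (hdisj hj) hv hvi, u, hu, huv⟩

variable [Fintype V] [DecidableRel G.Adj]

lemma ncard_neighborSet (v : V) : (G.neighborSet v).ncard = G.degree v := by
  rw [ncard_eq_toFinset_card', toFinset_card, card_neighborSet_eq_degree]

lemma ncard_outerBoundary_singleton_le (u : V) : (G.outerBoundary {u}).ncard ≤ G.degree u :=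
  G.ncard_neighborSet u ▸ ncard_le_ncard (G.outerBoundary_singleton_subset u)

lemma ncard_outerBoundary_pair_add_two_le {u v : V} (huv : G.Adj u v) :
    (G.outerBoundary {u, v}).ncard + 2 ≤ G.degree u + G.degree v := by
  have hu := ncard_sdiff_singleton_add_one ((G.mem_neighborSet u v).mpr huv)
  have hv := ncard_sdiff_singleton_add_one ((G.mem_neighborSet v u).mpr huv.symm)
  have := (ncard_le_ncard (G.outerBoundary_pair_subset u v)).trans (ncard_union_le _ _)
  rw [← G.ncard_neighborSet u, ← G.ncard_neighborSet v]
  omega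

lemma three_le_ncard_of_five_le_ncard_outerBoundary (hdeg : ∀ v, G.degree v ≤ 3)
    {S : Set V} (hS : (G.induce S).Connected) (hbd : 5 ≤ (G.outerBoundary S).ncard) :
    3 ≤ S.ncard := by
  have hpos : 0 < S.ncard := (ncard_pos S.toFinite).mpr (nonempty_coe_sort.mp hS.nonempty)
  by_contra! hlt
  obtain hone | htwo : S.ncard = 1 ∨ S.ncard = 2 := by omega
  · obtain ⟨u, rfl⟩ := ncard_eq_one.mp hone
    have := G.ncard_outerBoundary_singleton_le u
    have := hdeg u
    omega
  · obtain ⟨u, v, huv, rfl⟩ := ncard_eq_two.mp htwo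
    have := G.ncard_outerBoundary_pair_add_two_le
      (G.adj_of_preconnected_induce_pair huv hS.preconnected)
    have := hdeg u
    have := hdeg v
    omega

end SimpleGraph

theorem cubic_K6_minor_large {V : Type*} [Fintype V]
    (G : SimpleGraph V) [DecidableRel G.Adj]
    (hcubic : ∀ v : V, G.degree v = 3)
    (hminor : HasK6Minor G) :
    18 ≤ Fintype.card V := by
  obtain ⟨f, -, hdisj, hconn, hadj⟩ := hminor
  have hbranch : ∀ i, 3 ≤ (f i).ncard := fun i =>
    G.three_le_ncard_of_five_le_ncard_outerBoundary (fun v => (hcubic v).le) (hconn i)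
      (by simpa using G.natCard_ne_le_ncard_outerBoundary hdisj hadj i)
  calc 18 = ∑ _i : Fin 6, 3 := rfl
    _ ≤ ∑ i, (f i).ncard := Finset.sum_le_sum fun i _ => hbranch i
    _ = (⋃ i, f i).ncard := by
      rw [ncard_iUnion_of_finite (fun i => toFinite _) hdisj, finsum_eq_sum_of_fintype]
    _ ≤ Fintype.card V := by
      simpa using ncard_le_ncard (subset_univ (⋃ i, f i))
end

section
/- If G is a cubic connected graph with first Betti number at most 8 containing K_6 as a minor, then a contradiction follows; equivalently, no connected cubic graph with Betti number ≤ 8 contains a K_6 minor. -/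
/-!
In a cubic graph `2|E| = 3|V|`, so the Betti number is `|V|/2 + 1` and `|V| ≤ 14`. On the other
hand a connected set of `k` vertices spans at least `k - 1` edges, hence has at most `k + 2`
neighbours outside itself; a branch set of a `K₆` model needs five (one in each other branch
set), so it has at least three vertices, and the six branch sets need `18 > 14` vertices.
-/

open Finset Function

namespace SimpleGraph

variable {V : Type*} [Fintype V] {G : SimpleGraph V} [DecidableRel G.Adj]

theorem two_mul_card_edgeFinset_of_degree_eq {d : ℕ} (h : ∀ v, G.degree v = d) :
    2 * #G.edgeFinset = d * Fintype.card V := by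
  rw [← sum_degrees_eq_twice_card_edges]
  simp [h, mul_comm]

variable [DecidableEq V] (G)

def outerNeighborFinset (s : Finset V) : Finset V := s.biUnion fun v => G.neighborFinset v \ s

variable {G}

theorem mem_outerNeighborFinset {s : Finset V} {w : V} :
    w ∈ G.outerNeighborFinset s ↔ w ∉ s ∧ ∃ v ∈ s, G.Adj v w := by
  simp only [outerNeighborFinset, mem_biUnion, mem_sdiff, mem_neighborFinset]
  tauto

theorem degree_induce_coe (s : Finset V) (v : s) :
    (G.induce (s : Set V)).degree v = #(G.neighborFinset v ∩ s) := by
  rw [← card_neighborFinset_eq_degree, ← card_map (.subtype (· ∈ (s : Set V)))]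
  congr 1
  ext
  simp

theorem sum_card_neighborFinset_inter (s : Finset V) :
    ∑ v ∈ s, #(G.neighborFinset v ∩ s) = 2 * Nat.card (G.induce (s : Set V)).edgeSet := by
  rw [Nat.card_eq_fintype_card, ← edgeFinset_card, ← sum_degrees_eq_twice_card_edges,
    ← Finset.sum_coe_sort s]
  exact Fintype.sum_congr _ _ fun v => (degree_induce_coe s v).symm

theorem card_outerNeighborFinset_add_two_mul_card_le {s : Finset V} {d : ℕ}
    (hs : (G.induce (s : Set V)).Connected) (hdeg : ∀ v ∈ s, G.degree v ≤ d) :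
    #(G.outerNeighborFinset s) + 2 * #s ≤ d * #s + 2 := by
  have hspan : #s ≤ Nat.card (G.induce (s : Set V)).edgeSet + 1 := by
    simpa using hs.card_vert_le_card_edgeSet_add_one
  have hends : ∑ v ∈ s, #(G.neighborFinset v \ s) + ∑ v ∈ s, #(G.neighborFinset v ∩ s)
      ≤ d * #s := by
    rw [← sum_add_distrib, mul_comm, ← smul_eq_mul, ← sum_const]
    refine sum_le_sum fun v hv => ?_
    rw [card_sdiff_add_card_inter, card_neighborFinset_eq_degree]
    exact hdeg v hv
  have hout : #(G.outerNeighborFinset s) ≤ ∑ v ∈ s, #(G.neighborFinset v \ s) :=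
    card_biUnion_le
  rw [sum_card_neighborFinset_inter] at hends
  omega

theorem card_le_card_outerNeighborFinset_add_one {ι : Type*} [Fintype ι] [DecidableEq ι]
    {f : ι → Finset V} (hdisj : Pairwise (Disjoint on f))
    (hadj : ∀ i j, i ≠ j → ∃ u ∈ f i, ∃ v ∈ f j, G.Adj u v) (i : ι) :
    Fintype.card ι ≤ #(G.outerNeighborFinset (f i)) + 1 := by
  have hmeet : ∀ j : {j // j ≠ i}, ∃ w ∈ G.outerNeighborFinset (f i), w ∈ f j := by
    rintro ⟨j, hji⟩
    obtain ⟨u, hu, w, hw, huw⟩ := hadj i j hji.symm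
    exact ⟨w, mem_outerNeighborFinset.2 ⟨Finset.disjoint_left.1 (hdisj hji) hw, u, hu, huw⟩, hw⟩
  choose w hw hwf using hmeet
  have hinj : Injective fun j => (⟨w j, hw j⟩ : G.outerNeighborFinset (f i)) := by
    intro j k hjk
    have hwjk : w j = w k := congrArg Subtype.val hjk
    by_contra hne
    exact Finset.disjoint_left.1 (hdisj (Subtype.coe_ne_coe.2 hne)) (hwf j) (hwjk ▸ hwf k)
  have := Fintype.card_le_of_injective _ hinj
  simp only [Fintype.card_subtype_compl, Fintype.card_subtype_eq, Fintype.card_coe] at this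
  omega

end SimpleGraph

open SimpleGraph

theorem HasK6Minor.eighteen_le_card {V : Type*} [Fintype V]
    {G : SimpleGraph V} [DecidableRel G.Adj] (hdeg : ∀ v, G.degree v ≤ 3) (hG : HasK6Minor G) :
    18 ≤ Fintype.card V := by
  classical
  obtain ⟨f, -, hdisj, hconn, hadj⟩ := hG
  set F : Fin 6 → Finset V := fun i => (f i).toFinset
  have hdisjF : Pairwise (Disjoint on F) := fun i j hij => Set.disjoint_toFinset.2 (hdisj hij)
  have hbranch : ∀ i, 3 ≤ #(F i) := by
    intro i
    have hfive := card_le_card_outerNeighborFinset_add_one hdisjF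
      (fun i j hij => by simpa [F] using hadj i j hij) i
    have hsparse := card_outerNeighborFinset_add_two_mul_card_le (s := F i)
      (by rw [Set.coe_toFinset]; exact hconn i) fun v _ => hdeg v
    simp only [Fintype.card_fin] at hfive
    omega
  calc 18 = ∑ _i : Fin 6, 3 := rfl
    _ ≤ ∑ i, #(F i) := sum_le_sum fun i _ => hbranch i
    _ = #(univ.biUnion F) := (card_biUnion fun i _ j _ hij => hdisjF hij).symm
    _ ≤ Fintype.card V := card_le_univ _

theorem cubic_small_betti_no_K6_minor_general {V : Type*} [Fintype V]
    (G : SimpleGraph V) [DecidableRel G.Adj]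
    (hcubic : ∀ v : V, G.degree v = 3)
    (hbetti : (G.edgeFinset.card : ℤ) - Fintype.card V + 1 ≤ 8)
    (hminor : HasK6Minor G) :
    False := by
  classical
  have hedges := two_mul_card_edgeFinset_of_degree_eq hcubic
  have h18 := hminor.eighteen_le_card fun v => (hcubic v).le
  omega

theorem cubic_small_betti_no_K6_minor {V : Type*} [Fintype V] [DecidableEq V]
    (G : SimpleGraph V) [DecidableRel G.Adj]
    (hconn : G.Connected)
    (hcubic : ∀ v : V, G.degree v = 3)
    (hbetti : (G.edgeFinset.card : ℤ) - Fintype.card V + 1 ≤ 8)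
    (hminor : HasK6Minor G) :
    False :=
  cubic_small_betti_no_K6_minor_general G hcubic hbetti hminor
end
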